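/- (Theorem 3.2, first part) Let L be a non-metabelian graded Lie algebra of maximal class over a field F, with setup elements x, y and first constituent length ℓ. Then the characteristic of F is a positive prime p, and ℓ = 2q for some power q = p^m of p. -/

import Mathlib

/-- Left-normed bracket of `a` with `n` copies of `b`:
`lnb a b n = [a b … b]` with `n` occurrences of `b`. -/
def lnb {L : Type*} [LieRing L] (a b : L) : ℕ → L
  | 0 => a
  | n + 1 => ⁅lnb a b n, b⁆

/-- `Lc` is a grading of `L` (indexed by `ℕ`, with trivial component in degree `0`)
making `L` an (infinite-dimensional) graded Lie algebra of maximal class: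
`L` is the internal direct sum of the `Lc i`, `⁅Lc i, Lc j⁆ ⊆ Lc (i+j)`,
`dim (Lc 1) = 2`, `dim (Lc i) = 1` for `i ≥ 2`, and
`Lc (i+1) = span {⁅u, w⁆ : u ∈ Lc i, w ∈ Lc 1}` for `i ≥ 1`. -/
structure IsMaxClassGrading (F : Type*) [Field F] (L : Type*) [LieRing L] [LieAlgebra F L]
    (Lc : ℕ → Submodule F L) : Prop where
  zero : Lc 0 = ⊥
  internal : DirectSum.IsInternal Lc
  bracket_mem : ∀ i j : ℕ, ∀ u ∈ Lc i, ∀ w ∈ Lc j, ⁅u, w⁆ ∈ Lc (i + j)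
  dim_one : Module.finrank F (Lc 1) = 2
  dim_rest : ∀ i : ℕ, 2 ≤ i → Module.finrank F (Lc i) = 1
  gen : ∀ i : ℕ, 1 ≤ i →
    Lc (i + 1) = Submodule.span F {z | ∃ u ∈ Lc i, ∃ w ∈ Lc 1, z = ⁅u, w⁆}

/-- The standard setup for a non-metabelian graded Lie algebra of maximal class:
`y ∈ L_1` is nonzero and centralizes `L_2`, `x ∈ L_1` is not a scalar multiple of `y`,
the first constituent length `ℓ` is positive with `[y x^i y] = 0` for `0 ≤ i < ℓ−1` and
`[y x^{ℓ−1} y] ≠ 0`, and `x` is normalized so that `[y x^ℓ] = 0`. -/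
structure MaxClassSetup {F : Type*} [Field F] {L : Type*} [LieRing L] [LieAlgebra F L]
    (Lc : ℕ → Submodule F L) (x y : L) (ℓ : ℕ) : Prop where
  y_mem : y ∈ Lc 1
  y_ne : y ≠ 0
  y_central : ∀ u ∈ Lc 2, ⁅u, y⁆ = 0
  x_mem : x ∈ Lc 1
  x_not_mul : ∀ c : F, x ≠ c • y
  ell_pos : 0 < ℓ
  first_const : ∀ i : ℕ, i < ℓ - 1 → ⁅lnb y x i, y⁆ = 0
  first_const_ne : ⁅lnb y x (ℓ - 1), y⁆ ≠ 0
  normalized : lnb y x ℓ = 0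

/-- The sequences `(ℓ_r)_{r≥1}` of constituent lengths and `(v_r)_{r≥1}` of
distinguished homogeneous elements: `ℓ_1 = ℓ`, `v_1 = [y x^{ℓ−1}]`, and for `r ≥ 2`,
`ℓ_r > 0`, `[v_{r−1} y x^i y] = 0` for `0 ≤ i < ℓ_r − 1`,
`v_r = [v_{r−1} y x^{ℓ_r − 1}]`, and `[v_r y] ≠ 0`. -/
structure ConstituentSeq {F : Type*} [Field F] {L : Type*} [LieRing L] [LieAlgebra F L]
    (x y : L) (ℓ : ℕ) (l : ℕ → ℕ) (v : ℕ → L) : Prop where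
  l_one : l 1 = ℓ
  v_one : v 1 = lnb y x (ℓ - 1)
  l_pos : ∀ r : ℕ, 2 ≤ r → 0 < l r
  const : ∀ r : ℕ, 2 ≤ r → ∀ i : ℕ, i < l r - 1 → ⁅lnb ⁅v (r - 1), y⁆ x i, y⁆ = 0
  v_def : ∀ r : ℕ, 2 ≤ r → v r = lnb ⁅v (r - 1), y⁆ x (l r - 1)
  const_end : ∀ r : ℕ, 2 ≤ r → ⁅v r, y⁆ ≠ 0


/-!
Write `S b = [y x^b]` and `t = [y x^(ℓ-1) y]`. As `y` commutes with every `S m` except `S (ℓ-1)`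
and `S m = 0` for `m ≥ ℓ`, the Leibniz rule gives `[S (ℓ-1-i), S b] = (-1)^i C(b,i) [t x^(b-i)]`.
Let `n` be least with `[t x^n] = 0`; the dimension conditions force `2 ≤ n < ℓ` and
`[t x^(n-1) y] ≠ 0`. Taking `b = ℓ` yields `C(ℓ,j) = 0` in `F` for `0 < j < n`, and the Jacobi
identity with `y` yields `C(n-1+k,k) = 0` for `0 < k < ℓ`, `k ≠ ℓ - n`; for odd `ℓ = 2k+1` the
formula would give `0 = [S k, S k] = ±t`.

So `F` has characteristic `p > 0`, and Lucas' congruence `C(p^a m + b, p^a) ≡ m` for `b < p^a`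
turns the vanishing into `ℓ - n = p^a` where `p^a ∥ n`, and `n ≤ p^s` where `p^s ∥ ℓ`. Hence
`ℓ = 2 p^a`, or else `ℓ < 2 p^s` forces `ℓ = p^s`, and then evenness forces `p = 2`.
-/

namespace Nat

theorem choose_pow_mul_add_modEq {p a b : ℕ} [Fact p.Prime] (m : ℕ) (hb : b < p ^ a) :
    (p ^ a * m + b).choose (p ^ a) ≡ m [MOD p] := by
  induction a generalizing b with
  | zero =>
    obtain rfl : b = 0 := by simpa using hb
    simpa using Nat.ModEq.refl m
  | succ a ih =>
    have hp := (Fact.out : p.Prime).pos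
    rw [pow_succ'] at hb ⊢
    refine Choose.choose_modEq_choose_mod_mul_choose_div_nat.trans ?_
    rw [mul_assoc, Nat.mul_add_mod, Nat.mul_mod_right, Nat.mul_add_div hp,
      Nat.mul_div_cancel_left _ hp, Nat.choose_zero_right, one_mul]
    exact ih (Nat.div_lt_of_lt_mul hb)

theorem not_dvd_choose_pow_mul_add {p a b m : ℕ} [Fact p.Prime] (hb : b < p ^ a) (hm : ¬p ∣ m) :
    ¬p ∣ (p ^ a * m + b).choose (p ^ a) := by
  rwa [(choose_pow_mul_add_modEq m hb).dvd_iff dvd_rfl]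

end Nat

theorem eq_two_mul_pow_of_prime_dvd_choose {p ℓ n : ℕ} [hp : Fact p.Prime] (hℓ : Even ℓ)
    (hn : 0 < n) (hnℓ : n < ℓ) (hc : ∀ j, 1 ≤ j → j < n → p ∣ ℓ.choose j)
    (hd : ∀ k, 1 ≤ k → k < ℓ → k ≠ ℓ - n → p ∣ (n - 1 + k).choose k) :
    ∃ m, ℓ = 2 * p ^ m := by
  obtain ⟨a, u, hu, rfl⟩ := Nat.exists_eq_pow_mul_and_not_dvd hn.ne' p hp.out.ne_one
  obtain ⟨s, r, hr, hℓr⟩ := Nat.exists_eq_pow_mul_and_not_dvd (by omega : ℓ ≠ 0) p hp.out.ne_one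
  have hpa : 0 < p ^ a := pow_pos hp.out.pos a
  have hu0 : 0 < u := Nat.pos_of_mul_pos_left hn
  have hpau : p ^ a ≤ p ^ a * u := Nat.le_mul_of_pos_right _ hu0
  -- `hd` fails at `k = p ^ a`, so `p ^ a` is the excluded index `ℓ - n`.
  have hℓa : ℓ = p ^ a * u + p ^ a := by
    by_contra h
    refine Nat.not_dvd_choose_pow_mul_add (Nat.sub_lt hpa one_pos) hu ?_
    convert hd (p ^ a) hpa (by omega) (by omega) using 2
    omega
  have hns : p ^ a * u ≤ p ^ s := by
    by_contra h
    refine Nat.not_dvd_choose_pow_mul_add (b := 0) (pow_pos hp.out.pos s) hr ?_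
    simpa [← hℓr] using hc (p ^ s) (Nat.one_le_pow _ _ hp.out.pos) (by omega)
  rcases eq_or_ne u 1 with rfl | hu1
  · exact ⟨a, by rw [hℓa]; ring⟩
  · have hr1 : r = 1 := by
      have : p ^ a < p ^ a * u := lt_mul_of_one_lt_right hpa (by omega)
      have : p ^ s * r < p ^ s * 2 := by omega
      have := Nat.lt_of_mul_lt_mul_left this
      have : r ≠ 0 := by rintro rfl; simp at hr
      omega
    rw [hr1, mul_one] at hℓr
    obtain ⟨s, rfl⟩ : ∃ s', s = s' + 1 := Nat.exists_eq_add_one.mpr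
      (Nat.pos_of_ne_zero (by rintro rfl; simp [hℓr] at hℓ))
    obtain rfl : 2 = p := (Nat.prime_dvd_prime_iff_eq Nat.prime_two hp.out).mp
      (Nat.prime_two.dvd_of_dvd_pow (hℓr ▸ hℓ.two_dvd))
    exact ⟨s, by rw [hℓr, pow_succ']⟩

theorem neg_one_pow_zsmul_eq_zero_iff {M : Type*} [AddCommGroup M] (i : ℕ) {v : M} :
    (-1 : ℤ) ^ i • v = 0 ↔ v = 0 := by
  rcases neg_one_pow_eq_or ℤ i with h | h <;> simp [h]

section LieRing

variable {L : Type*} [LieRing L]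

theorem lnb_succ (a b : L) (n : ℕ) : lnb a b (n + 1) = ⁅lnb a b n, b⁆ := rfl

theorem lnb_eq_zero_of_le {a b : L} {n m : ℕ} (h : lnb a b n = 0) (hnm : n ≤ m) :
    lnb a b m = 0 := by
  induction m, hnm using Nat.le_induction with
  | base => exact h
  | succ m _ ih => rw [lnb, ih, zero_lie]

theorem lie_lnb_succ (u a b : L) (n : ℕ) :
    ⁅u, lnb a b (n + 1)⁆ = ⁅⁅u, lnb a b n⁆, b⁆ - ⁅⁅u, b⁆, lnb a b n⁆ := by
  rw [lnb, leibniz_lie, ← lie_skew ⁅u, b⁆, sub_neg_eq_add]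

-- For `b < i` the coefficient vanishes, so the truncated index `b - i` is harmless.
theorem lie_lnb_lnb {x y : L} {ℓ : ℕ} (hy : ∀ m, m ≠ ℓ - 1 → ⁅lnb y x m, y⁆ = 0)
    (hℓ : ∀ m, ℓ ≤ m → lnb y x m = 0) (b : ℕ) :
    ∀ i ≤ ℓ - 1, ⁅lnb y x (ℓ - 1 - i), lnb y x b⁆ =
      (-1 : ℤ) ^ i • b.choose i • lnb ⁅lnb y x (ℓ - 1), y⁆ x (b - i) := by
  induction b with
  | zero =>
    rintro (_ | i) hi
    · simp [lnb]
    · simp [lnb, hy _ (show ℓ - 1 - (i + 1) ≠ ℓ - 1 by omega)]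
  | succ b ih =>
    rintro (_ | i) hi <;> rw [lie_lnb_succ, ← lnb_succ]
    · rw [ih 0 (Nat.zero_le _), hℓ (ℓ - 1 - 0 + 1) (by omega), zero_lie, sub_zero]
      simp [lnb]
    · rw [show ℓ - 1 - (i + 1) + 1 = ℓ - 1 - i by omega, ih i (by omega), ih (i + 1) hi,
        zsmul_lie, nsmul_lie, ← lnb_succ]
      have hshift : b.choose (i + 1) • lnb ⁅lnb y x (ℓ - 1), y⁆ x (b - (i + 1) + 1) =
          b.choose (i + 1) • lnb ⁅lnb y x (ℓ - 1), y⁆ x (b - i) := by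
        rcases lt_or_ge b (i + 1) with hb | hb
        · simp [Nat.choose_eq_zero_of_lt hb]
        · rw [show b - (i + 1) + 1 = b - i by omega]
      rw [hshift, Nat.choose_succ_succ', show b + 1 - (i + 1) = b - i by omega]
      module

theorem choose_nsmul_lnb_eq_zero {x y : L} {ℓ : ℕ} (hy : ∀ m, m ≠ ℓ - 1 → ⁅lnb y x m, y⁆ = 0)
    (hℓ : ∀ m, ℓ ≤ m → lnb y x m = 0) {j : ℕ} (hj : 1 ≤ j) (hjℓ : j ≤ ℓ) :
    ℓ.choose j • lnb ⁅lnb y x (ℓ - 1), y⁆ x j = 0 := by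
  have h := lie_lnb_lnb hy hℓ ℓ (ℓ - j) (by omega)
  rw [hℓ ℓ le_rfl, lie_zero, Nat.choose_symm hjℓ, Nat.sub_sub_self hjℓ] at h
  exact (neg_one_pow_zsmul_eq_zero_iff _).mp h.symm

theorem choose_nsmul_lie_lnb_eq_zero {x y : L} {ℓ : ℕ}
    (hy : ∀ m, m ≠ ℓ - 1 → ⁅lnb y x m, y⁆ = 0) (hℓ : ∀ m, ℓ ≤ m → lnb y x m = 0) {k m : ℕ}
    (hk : 1 ≤ k) (hkℓ : k ≤ ℓ - 1) (hmk : m + k ≠ ℓ - 1) :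
    (m + k).choose k • ⁅lnb ⁅lnb y x (ℓ - 1), y⁆ x m, y⁆ = 0 := by
  have h := lie_lie (lnb y x (ℓ - 1 - k)) (lnb y x (m + k)) y
  rw [hy _ hmk, hy (ℓ - 1 - k) (by omega), lie_zero, lie_zero, sub_zero,
    lie_lnb_lnb hy hℓ _ k hkℓ, zsmul_lie, nsmul_lie, Nat.add_sub_cancel] at h
  exact (neg_one_pow_zsmul_eq_zero_iff _).mp h

theorem even_of_lie_lnb_ne_zero {x y : L} {ℓ : ℕ} (hy : ∀ m, m ≠ ℓ - 1 → ⁅lnb y x m, y⁆ = 0)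
    (hℓ : ∀ m, ℓ ≤ m → lnb y x m = 0) (ht : ⁅lnb y x (ℓ - 1), y⁆ ≠ 0) : Even ℓ := by
  by_contra hodd
  obtain ⟨k, rfl⟩ := Nat.not_even_iff_odd.mp hodd
  have h := lie_lnb_lnb hy hℓ k k (by omega)
  rw [show 2 * k + 1 - 1 - k = k by omega, lie_self, Nat.choose_self, Nat.sub_self, one_smul] at h
  exact ht ((neg_one_pow_zsmul_eq_zero_iff k).mp h.symm)

theorem lnb_lie_lnb_sub_one_eq_zero {x y : L} {ℓ : ℕ}
    (hy : ∀ m, m ≠ ℓ - 1 → ⁅lnb y x m, y⁆ = 0) (hℓ : ∀ m, ℓ ≤ m → lnb y x m = 0) :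
    lnb ⁅lnb y x (ℓ - 1), y⁆ x (ℓ - 1) = 0 := by
  have h := lie_lnb_lnb hy hℓ (ℓ - 1) 0 (Nat.zero_le _)
  rw [Nat.sub_zero, lie_self, Nat.choose_zero_right, pow_zero, one_smul, one_smul] at h
  exact h.symm

end LieRing

section MaxClass

variable {F L : Type*} [Field F] [LieRing L] [LieAlgebra F L] {Lc : ℕ → Submodule F L}

theorem IsMaxClassGrading.lnb_mem (hL : IsMaxClassGrading F L Lc) {u w : L} {d : ℕ}
    (hu : u ∈ Lc d) (hw : w ∈ Lc 1) (k : ℕ) : lnb u w k ∈ Lc (d + k) := by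
  induction k with
  | zero => exact hu
  | succ k ih => exact hL.bracket_mem _ 1 _ ih _ hw

namespace MaxClassSetup

variable {x y : L} {ℓ : ℕ}

theorem lnb_eq_zero (hs : MaxClassSetup Lc x y ℓ) (m : ℕ) (hm : ℓ ≤ m) : lnb y x m = 0 :=
  lnb_eq_zero_of_le hs.normalized hm

theorem lie_lnb_eq_zero (hs : MaxClassSetup Lc x y ℓ) (m : ℕ) (hm : m ≠ ℓ - 1) :
    ⁅lnb y x m, y⁆ = 0 := by
  rcases lt_or_gt_of_ne hm with h | h
  · exact hs.first_const m h
  · rw [hs.lnb_eq_zero m (by omega), zero_lie]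

theorem even (hs : MaxClassSetup Lc x y ℓ) : Even ℓ :=
  even_of_lie_lnb_ne_zero hs.lie_lnb_eq_zero hs.lnb_eq_zero hs.first_const_ne

theorem three_le (hL : IsMaxClassGrading F L Lc) (hs : MaxClassSetup Lc x y ℓ) : 3 ≤ ℓ := by
  have := hs.ell_pos
  by_contra! h
  interval_cases ℓ
  · exact hs.first_const_ne (lie_self y)
  · exact hs.first_const_ne (hs.y_central _ (hL.lnb_mem hs.y_mem hs.x_mem 1))

theorem span_eq (hL : IsMaxClassGrading F L Lc) (hs : MaxClassSetup Lc x y ℓ) :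
    Submodule.span F {x, y} = Lc 1 := by
  have : FiniteDimensional F (Lc 1) := Module.finite_of_finrank_pos (by rw [hL.dim_one]; norm_num)
  refine Submodule.eq_of_le_of_finrank_eq ?_ ?_
  · exact Submodule.span_le.mpr (Set.insert_subset_iff.mpr ⟨hs.x_mem, by simpa using hs.y_mem⟩)
  · have hli : LinearIndependent F ![x, y] :=
      linearIndependent_fin2.mpr ⟨hs.y_ne, fun a h => hs.x_not_mul a (by simpa using h.symm)⟩
    rw [hL.dim_one, ← Matrix.range_cons_cons_empty x y ![], finrank_span_eq_card hli]
    simp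

theorem lie_x_ne_zero_or_lie_y_ne_zero (hL : IsMaxClassGrading F L Lc)
    (hs : MaxClassSetup Lc x y ℓ) {d : ℕ} (hd : 2 ≤ d) {w : L} (hw : w ∈ Lc d) (hw0 : w ≠ 0) :
    ⁅w, x⁆ ≠ 0 ∨ ⁅w, y⁆ ≠ 0 := by
  by_contra! h
  have hbot : Lc (d + 1) = ⊥ := by
    rw [hL.gen d (by omega), Submodule.span_eq_bot]
    rintro _ ⟨u, hu, v, hv, rfl⟩
    rw [eq_span_singleton_of_mem_of_finrank_eq_one (hL.dim_rest d hd) hw hw0] at hu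
    rw [← hs.span_eq hL] at hv
    obtain ⟨c, rfl⟩ := Submodule.mem_span_singleton.mp hu
    obtain ⟨a, b, rfl⟩ := Submodule.mem_span_pair.mp hv
    simp [h.1, h.2]
  have hdim := hL.dim_rest (d + 1) (by omega)
  rw [hbot, finrank_bot] at hdim
  exact zero_ne_one hdim

theorem exists_lnb_ne_zero (hL : IsMaxClassGrading F L Lc) (hs : MaxClassSetup Lc x y ℓ) :
    ∃ n, 2 ≤ n ∧ n < ℓ ∧ (∀ k < n, lnb ⁅lnb y x (ℓ - 1), y⁆ x k ≠ 0) ∧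
      ⁅lnb ⁅lnb y x (ℓ - 1), y⁆ x (n - 1), y⁆ ≠ 0 := by
  classical
  have hℓ3 := hs.three_le hL
  set t := ⁅lnb y x (ℓ - 1), y⁆
  have htmem : ∀ k, lnb t x k ∈ Lc (ℓ + 1 + k) := by
    refine hL.lnb_mem ?_ hs.x_mem
    have h := hL.bracket_mem _ 1 _ (hL.lnb_mem hs.y_mem hs.x_mem (ℓ - 1)) y hs.y_mem
    rwa [show 1 + (ℓ - 1) + 1 = ℓ + 1 by omega] at h
  have hTℓ : lnb t x (ℓ - 1) = 0 :=
    lnb_lie_lnb_sub_one_eq_zero hs.lie_lnb_eq_zero hs.lnb_eq_zero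
  have hex : ∃ n, lnb t x n = 0 := ⟨ℓ - 1, hTℓ⟩
  have hty : ⁅t, y⁆ = 0 := by
    have h := choose_nsmul_lie_lnb_eq_zero hs.lie_lnb_eq_zero hs.lnb_eq_zero
      (m := 0) le_rfl (by omega) (by omega)
    rwa [zero_add, Nat.choose_self, one_smul] at h
  have htx : ⁅t, x⁆ ≠ 0 :=
    (hs.lie_x_ne_zero_or_lie_y_ne_zero hL (by omega) (htmem 0) hs.first_const_ne).resolve_right
      (not_not.mpr hty)
  have hn : 1 < Nat.find hex := (Nat.lt_find_iff hex 1).mpr fun k hk => by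
    interval_cases k
    exacts [hs.first_const_ne, htx]
  refine ⟨Nat.find hex, hn, ?_, fun k => Nat.find_min hex, ?_⟩
  · exact (Nat.find_min' hex hTℓ).trans_lt (by omega)
  · refine (hs.lie_x_ne_zero_or_lie_y_ne_zero hL (by omega) (htmem _)
      (Nat.find_min hex (by omega))).resolve_left ?_
    rw [not_not, ← lnb_succ, Nat.sub_add_cancel (by omega)]
    exact Nat.find_spec hex

theorem exists_choose_eq_zero (hL : IsMaxClassGrading F L Lc) (hs : MaxClassSetup Lc x y ℓ) :
    ∃ n, 2 ≤ n ∧ n < ℓ ∧ (∀ j, 1 ≤ j → j < n → (ℓ.choose j : F) = 0) ∧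
      ∀ k, 1 ≤ k → k < ℓ → k ≠ ℓ - n → ((n - 1 + k).choose k : F) = 0 := by
  obtain ⟨n, hn, hnℓ, hT, hTy⟩ := hs.exists_lnb_ne_zero hL
  have cast_eq_zero {c : ℕ} {v : L} (h : c • v = 0) (hv : v ≠ 0) : (c : F) = 0 := by
    rw [← Nat.cast_smul_eq_nsmul F] at h
    exact (smul_eq_zero.mp h).resolve_right hv
  refine ⟨n, hn, hnℓ, fun j hj hjn => ?_, fun k hk hkℓ hkn => ?_⟩
  · exact cast_eq_zero (choose_nsmul_lnb_eq_zero hs.lie_lnb_eq_zero hs.lnb_eq_zero hj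
      (by omega)) (hT j hjn)
  · exact cast_eq_zero (choose_nsmul_lie_lnb_eq_zero hs.lie_lnb_eq_zero hs.lnb_eq_zero hk
      (by omega) (by omega)) hTy

end MaxClassSetup

end MaxClass

/-- Theorem 3.2, first part: the first constituent length of a non-metabelian graded
Lie algebra of maximal class equals `2q`, where `q` is a power of the (necessarily
positive prime) characteristic `p` of the ground field. -/
theorem first_constituent_length {F : Type*} [Field F] {L : Type*} [LieRing L] [LieAlgebra F L]
    (Lc : ℕ → Submodule F L) (hL : IsMaxClassGrading F L Lc)
    (x y : L) (ℓ : ℕ) (hsetup : MaxClassSetup Lc x y ℓ) :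
    ∃ p : ℕ, p.Prime ∧ CharP F p ∧ ∃ m : ℕ, ℓ = 2 * p ^ m := by
  obtain ⟨n, hn, hnℓ, hc, hd⟩ := hsetup.exists_choose_eq_zero hL
  obtain ⟨p, hchar⟩ := CharP.exists F
  have hdvd (c : ℕ) (h : (c : F) = 0) : p ∣ c := (CharP.cast_eq_zero_iff F p c).mp h
  have hp : p.Prime := by
    refine (CharP.char_is_prime_or_zero F p).resolve_right ?_
    rintro rfl
    have := hdvd ℓ (by simpa using hc 1 le_rfl (by omega))
    rw [zero_dvd_iff] at this
    omega
  have : Fact p.Prime := ⟨hp⟩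
  exact ⟨p, hp, hchar, eq_two_mul_pow_of_prime_dvd_choose hsetup.even (by omega) hnℓ
    (fun j h₁ h₂ => hdvd _ (hc j h₁ h₂)) fun k h₁ h₂ h₃ => hdvd _ (hd k h₁ h₂ h₃)⟩
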